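/- For any word w over Σ with ι(w) ≥ 1, the sequence s ↦ ι(w^s) − ι(w^{s−1}) of growths of the universality index of powers of w is eventually periodic. -/

import Mathlib

/-!
Greedily cutting off arches (shortest prefixes containing every letter) gives, with `r(x)` the
remainder of the arch factorisation, `ι(x v) = ι(x) + ι(r(x) v)` and `r(x v) = r(r(x) v)`.
Hence `ι(w^(s+1)) - ι(w^s) = ι(r(w^s) w)` depends only on the state `r(w^s)`, which evolves
by `t ↦ r(t w)`. When `w` contains every letter, `r(w^s)` is a suffix of `w` for `s ≥ 1`,
so the states range over a finite set; they repeat, and from then on the states, and with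
them the growths, are periodic.
-/

open List

variable {α : Type*}

/-- `w` is `k`-universal: every word of length `k` over the alphabet `α`
is a scattered factor (subsequence) of `w`. -/
def IsUniversal [Fintype α] (k : ℕ) (w : List α) : Prop :=
  ∀ u : List α, u.length = k → u.Sublist w

/-- The universality index `ι(w)`: the largest `k` such that `w` is `k`-universal. -/
noncomputable def univIndex [Fintype α] (w : List α) : ℕ :=
  sSup {k | IsUniversal k w}

/-- The circular universality index `ζ(w)`: the largest `k` such that some
conjugate of `w` is `k`-universal. -/
noncomputable def circIndex [Fintype α] (w : List α) : ℕ :=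
  sSup {k | ∃ u v : List α, w = u ++ v ∧ IsUniversal k (v ++ u)}

/-- `wpow w s = w^s`, the `s`-fold concatenation of `w`. -/
def wpow (w : List α) (s : ℕ) : List α := (List.replicate s w).flatten

/-- Auxiliary (fuelled) computation of the remainder of the arch factorisation:
greedily remove the shortest prefix containing every letter of the alphabet. -/
def remAux [Fintype α] [DecidableEq α] : ℕ → List α → List α
  | 0, w => w
  | (n+1), w =>
    match (List.range' 1 w.length).find?
        (fun m => decide ((w.take m).toFinset = Finset.univ)) with
    | none => w
    | some m => remAux n (w.drop m)

/-- `rem w = r(w)`, the remainder of the arch factorisation of `w`. -/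
def rem [Fintype α] [DecidableEq α] (w : List α) : List α := remAux w.length w

/-- Auxiliary (fuelled) computation of the list of arches of `w`. -/
def archesAux [Fintype α] [DecidableEq α] : ℕ → List α → List (List α)
  | 0, _ => []
  | (n+1), w =>
    match (List.range' 1 w.length).find?
        (fun m => decide ((w.take m).toFinset = Finset.univ)) with
    | none => []
    | some m => (w.take m) :: archesAux n (w.drop m)

/-- `arches w`: the list `[arch₁(w), …, arch_{ι(w)}(w)]` of arches of `w`. -/
def arches [Fintype α] [DecidableEq α] (w : List α) : List (List α) :=
  archesAux w.length w

lemma sublist_of_cons_sublist_append_cons {b u y : List α} {c : α} (hcb : c ∉ b)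
    (h : c :: u <+ b ++ c :: y) : u <+ y := by
  obtain ⟨l₁, l₂, hl, h₁, h₂⟩ := sublist_append_iff.1 h
  cases l₁ with
  | nil =>
    rw [nil_append] at hl
    exact cons_sublist_cons.1 (hl ▸ h₂)
  | cons d l₁ =>
    obtain ⟨rfl, -⟩ := cons_eq_cons.1 hl
    exact absurd (h₁.subset mem_cons_self) hcb

lemma exists_eq_append_cons_of_forall_mem [Nonempty α] {x : List α} (hx : ∀ d, d ∈ x) :
    ∃ b c y, x = b ++ c :: y ∧ c ∉ b ∧ ∀ d, d ≠ c → d ∈ b := by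
  induction x using reverseRecOn with
  | nil => exact absurd (hx (Classical.arbitrary α)) not_mem_nil
  | append_singleton x e ih =>
    by_cases h : ∀ d, d ∈ x
    · obtain ⟨b, c, y, rfl, hcb, hb⟩ := ih h
      exact ⟨b, c, y ++ [e], by simp, hcb, hb⟩
    · push Not at h
      obtain ⟨d, hd⟩ := h
      obtain rfl : d = e := by simpa [hd] using hx d
      exact ⟨x, d, [], rfl, hd, fun d' hd' => by simpa [hd'] using hx d'⟩

/-- Induction along the arch factorisation: a word either misses a letter, or it is
`b ++ c :: y` where `b ++ [c]` is its first arch, i.e. `b` contains every letter except `c`. -/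
theorem arch_induction [Nonempty α] {P : List α → Prop} (x : List α)
    (not_mem : ∀ (x : List α) (c : α), c ∉ x → P x)
    (append_cons : ∀ (b : List α) (c : α) (y : List α), c ∉ b → (∀ d, d ≠ c → d ∈ b) →
      P y → P (b ++ c :: y)) : P x := by
  by_cases hx : ∀ d, d ∈ x
  · obtain ⟨b, c, y, rfl, hcb, hb⟩ := exists_eq_append_cons_of_forall_mem hx
    have : y.length < (b ++ c :: y).length := by simp only [length_append, length_cons]; omega
    exact append_cons b c y hcb hb (arch_induction y not_mem append_cons)
  · push Not at hx
    obtain ⟨c, hc⟩ := hx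
    exact not_mem x c hc
termination_by x.length

section Universality

variable [Fintype α]

lemma isUniversal_zero (x : List α) : IsUniversal 0 x := by
  intro u hu
  rw [length_eq_zero_iff.1 hu]
  exact nil_sublist x

lemma IsUniversal.mono [Nonempty α] {x : List α} {j k : ℕ} (h : IsUniversal k x)
    (hjk : j ≤ k) : IsUniversal j x := by
  obtain ⟨a⟩ := ‹Nonempty α›
  intro u hu
  exact (sublist_append_left u (replicate (k - j) a)).trans (h _ (by simp; omega))

lemma bddAbove_setOf_isUniversal [Nonempty α] (x : List α) :
    BddAbove {k | IsUniversal k x} := by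
  obtain ⟨a⟩ := ‹Nonempty α›
  exact ⟨x.length, fun k hk => by simpa using (hk (replicate k a) (by simp)).length_le⟩

lemma isUniversal_univIndex [Nonempty α] (x : List α) : IsUniversal (univIndex x) x :=
  Nat.sSup_mem ⟨0, isUniversal_zero x⟩ (bddAbove_setOf_isUniversal x)

lemma univIndex_eq_of_isUniversal [Nonempty α] {x : List α} {k : ℕ} (h : IsUniversal k x)
    (hsucc : ¬ IsUniversal (k + 1) x) : univIndex x = k := by
  refine le_antisymm ?_ (le_csSup (bddAbove_setOf_isUniversal x) h)
  by_contra! hk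
  exact hsucc ((isUniversal_univIndex x).mono hk)

lemma exists_length_eq_not_sublist [Nonempty α] (x : List α) :
    ∃ u : List α, u.length = univIndex x + 1 ∧ ¬ u <+ x := by
  by_contra! h
  have := le_csSup (bddAbove_setOf_isUniversal x) (fun u hu => h u hu)
  exact absurd this (Nat.not_succ_le_self _)

lemma univIndex_eq_zero_of_not_mem {x : List α} {c : α} (hc : c ∉ x) : univIndex x = 0 := by
  have : Nonempty α := ⟨c⟩
  exact univIndex_eq_of_isUniversal (isUniversal_zero x)
    fun h => hc (singleton_sublist.1 (h [c] rfl))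

lemma mem_of_univIndex_ne_zero {x : List α} (h : univIndex x ≠ 0) (c : α) : c ∈ x := by
  by_contra hc
  exact h (univIndex_eq_zero_of_not_mem hc)

lemma nonempty_of_univIndex_ne_zero {x : List α} (h : univIndex x ≠ 0) : Nonempty α := by
  by_contra hα
  rw [not_nonempty_iff] at hα
  refine h (Nat.sSup_of_not_bddAbove fun ⟨n, hn⟩ => ?_)
  have : IsUniversal (n + 1) x := fun u hu => by
    cases u with
    | nil => simp at hu
    | cons a _ => exact isEmptyElim a
  exact absurd (hn this) (Nat.not_succ_le_self n)

lemma univIndex_append_cons {b y : List α} {c : α} (hcb : c ∉ b)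
    (hb : ∀ d, d ≠ c → d ∈ b) : univIndex (b ++ c :: y) = univIndex y + 1 := by
  have : Nonempty α := ⟨c⟩
  refine univIndex_eq_of_isUniversal ?_ fun h => ?_
  · rintro (_ | ⟨d, u⟩) hu
    · simp at hu
    have hd : [d] <+ b ++ [c] := singleton_sublist.2 (by by_cases hdc : d = c <;> simp [hdc, hb])
    simpa using hd.append (isUniversal_univIndex y u (by simpa using hu))
  · obtain ⟨u, hu, hnot⟩ := exists_length_eq_not_sublist y
    exact hnot (sublist_of_cons_sublist_append_cons hcb (h (c :: u) (by simp [hu])))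

end Universality

section Remainder

variable [Fintype α] [DecidableEq α]

lemma remAux_of_not_mem {x : List α} {c : α} (hc : c ∉ x) (n : ℕ) : remAux n x = x := by
  cases n with
  | zero => rfl
  | succ n =>
    have hnone : (range' 1 x.length).find?
        (fun m => decide ((x.take m).toFinset = Finset.univ)) = none := by
      refine find?_eq_none.2 fun m _ hm => hc (mem_of_mem_take (i := m) ?_)
      rw [← mem_toFinset, of_decide_eq_true hm]
      exact Finset.mem_univ c
    simp only [remAux, hnone]

lemma rem_of_not_mem {x : List α} {c : α} (hc : c ∉ x) : rem x = x :=
  remAux_of_not_mem hc _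

lemma remAux_append_cons {b y : List α} {c : α} (hcb : c ∉ b) (hb : ∀ d, d ≠ c → d ∈ b)
    (n : ℕ) : remAux (n + 1) (b ++ c :: y) = remAux n y := by
  have hfind : (range' 1 (b ++ c :: y).length).find?
      (fun m => decide (((b ++ c :: y).take m).toFinset = Finset.univ)) = some (b.length + 1) := by
    rw [find?_range'_eq_some]
    refine ⟨?_, by simp [mem_range'_1]; omega, fun j hj1 hj2 => ?_⟩
    · have htake : (b ++ c :: y).take (b.length + 1) = b ++ [c] := by
        rw [take_append, take_of_length_le (by omega)]
        simp
      rw [decide_eq_true_iff, Finset.eq_univ_iff_forall, htake]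
      intro d
      by_cases hdc : d = c <;> simp [hdc, hb]
    · rw [take_append_of_le_length (by omega), Bool.not_eq_true', decide_eq_false_iff_not]
      intro hcov
      have : c ∈ (b.take j).toFinset := hcov ▸ Finset.mem_univ c
      exact hcb (mem_of_mem_take (mem_toFinset.1 this))
  simp only [remAux, hfind]
  simp

variable [Nonempty α]

lemma remAux_eq_rem {x : List α} {n : ℕ} (hn : x.length ≤ n) : remAux n x = rem x := by
  induction x using arch_induction generalizing n with
  | not_mem x c hc => rw [rem, remAux_of_not_mem hc, remAux_of_not_mem hc]
  | append_cons b c y hcb hb ih =>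
    have hlen : (b ++ c :: y).length = (b.length + y.length) + 1 := by
      simp only [length_append, length_cons]; omega
    obtain ⟨n, rfl⟩ : ∃ m, n = m + 1 := ⟨n - 1, by omega⟩
    rw [rem, hlen, remAux_append_cons hcb hb, remAux_append_cons hcb hb, ih (by omega),
      ih (by omega)]

lemma rem_append_cons {b y : List α} {c : α} (hcb : c ∉ b) (hb : ∀ d, d ≠ c → d ∈ b) :
    rem (b ++ c :: y) = rem y := by
  have hlen : (b ++ c :: y).length = (b.length + y.length) + 1 := by
    simp only [length_append, length_cons]; omega
  rw [rem, hlen, remAux_append_cons hcb hb, remAux_eq_rem (by omega)]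

lemma rem_append (x v : List α) : rem (x ++ v) = rem (rem x ++ v) := by
  induction x using arch_induction with
  | not_mem x c hc => rw [rem_of_not_mem hc]
  | append_cons b c y hcb hb ih =>
    rw [append_assoc, cons_append, rem_append_cons hcb hb, ih, rem_append_cons hcb hb]

lemma univIndex_append (x v : List α) :
    univIndex (x ++ v) = univIndex x + univIndex (rem x ++ v) := by
  induction x using arch_induction with
  | not_mem x c hc => rw [rem_of_not_mem hc, univIndex_eq_zero_of_not_mem hc, zero_add]
  | append_cons b c y hcb hb ih =>
    rw [append_assoc, cons_append, univIndex_append_cons hcb hb, ih,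
      univIndex_append_cons hcb hb, rem_append_cons hcb hb, add_right_comm]

lemma rem_suffix (x : List α) : rem x <:+ x := by
  induction x using arch_induction with
  | not_mem x c hc => rw [rem_of_not_mem hc]
  | append_cons b c y hcb hb ih =>
    rw [rem_append_cons hcb hb]
    exact ih.trans (suffix_append_of_suffix (suffix_cons c y))

lemma exists_not_mem_rem (x : List α) : ∃ c, c ∉ rem x := by
  induction x using arch_induction with
  | not_mem x c hc => exact ⟨c, by rwa [rem_of_not_mem hc]⟩
  | append_cons b c y hcb hb ih => rwa [rem_append_cons hcb hb]

lemma rem_append_suffix {w : List α} (hw : ∀ c, c ∈ w) (y : List α) : rem (y ++ w) <:+ w := by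
  have hrem := rem_suffix (y ++ w)
  rcases le_total (rem (y ++ w)).length w.length with h | h
  · exact suffix_of_suffix_length_le hrem (suffix_append y w) h
  · obtain ⟨c, hc⟩ := exists_not_mem_rem (y ++ w)
    exact absurd ((suffix_of_suffix_length_le (suffix_append y w) hrem h).subset (hw c)) hc

end Remainder

lemma exists_periodic_of_succ_eq_of_finite {β : Type*} {f : ℕ → β} {T : β → β}
    (hf : ∀ n, f (n + 1) = T (f n)) {S : Set β} (hS : S.Finite) (hfS : ∀ n, f n ∈ S) :
    ∃ n₀ p, 1 ≤ p ∧ ∀ n, n₀ ≤ n → f (n + p) = f n := by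
  obtain ⟨a, b, hab, hfab⟩ := hS.exists_lt_map_eq_of_forall_mem hfS
  refine ⟨a, b - a, by omega, fun n hn => ?_⟩
  obtain ⟨k, rfl⟩ := Nat.exists_eq_add_of_le hn
  clear hn
  induction k with
  | zero => rw [add_zero, Nat.add_sub_cancel' hab.le, hfab]
  | succ k ih => rw [← add_assoc, add_right_comm, hf, ih, hf]

lemma wpow_succ (w : List α) (s : ℕ) : wpow w (s + 1) = wpow w s ++ w := by
  simp [wpow, replicate_succ']

section Powers

variable [Fintype α] [DecidableEq α] [Nonempty α] (w : List α) (s : ℕ)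

lemma rem_wpow_succ : rem (wpow w (s + 1)) = rem (rem (wpow w s) ++ w) := by
  rw [wpow_succ, rem_append]

lemma univIndex_wpow_succ_sub :
    univIndex (wpow w (s + 1)) - univIndex (wpow w s) = univIndex (rem (wpow w s) ++ w) := by
  rw [wpow_succ, univIndex_append, Nat.add_sub_cancel_left]

end Powers

theorem growth_eventually_periodic [Fintype α] (w : List α)
    (hw : 1 ≤ univIndex w) :
    ∃ s₀ p : ℕ, 1 ≤ p ∧ ∀ s : ℕ, s₀ ≤ s →
      univIndex (wpow w (s + p)) - univIndex (wpow w (s + p - 1)) =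
        univIndex (wpow w s) - univIndex (wpow w (s - 1)) := by
  classical
  have hw₀ : univIndex w ≠ 0 := by omega
  have := nonempty_of_univIndex_ne_zero hw₀
  obtain ⟨n₀, p, hp, hper⟩ := exists_periodic_of_succ_eq_of_finite
    (f := fun n => rem (wpow w (n + 1))) (T := fun t => rem (t ++ w))
    (fun n => rem_wpow_succ w (n + 1)) w.tails.finite_toSet
    (fun n => (mem_tails _ _).2 <| by
      rw [rem_wpow_succ]
      exact rem_append_suffix (mem_of_univIndex_ne_zero hw₀) _)
  refine ⟨n₀ + 2, p, hp, fun s hs => ?_⟩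
  obtain ⟨n, rfl⟩ : ∃ n, s = n + 1 + 1 := ⟨s - 2, by omega⟩
  rw [show n + 1 + 1 + p = n + p + 1 + 1 by omega, Nat.add_sub_cancel, Nat.add_sub_cancel,
    univIndex_wpow_succ_sub, univIndex_wpow_succ_sub]
  exact congrArg (fun t => univIndex (t ++ w)) (hper n (by omega))
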